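/- arXiv:2205.09386 — 2 statements merged into one kernel-verified Lean document; each statement's English description precedes it below -/
import Mathlib

section
/- Let m ≥ 2 and let n_1, …, n_m be nonnegative integers with Σ_k n_k = n such that at least two of the n_k are positive. Then each term n_k/(n − n_l) + n_l/(n − n_k) − (n_k + n_l)/n (for k ≠ l) is nonnegative, and Σ_{1 ≤ k < l ≤ m} [ n_k/(n − n_l) + n_l/(n − n_k) − (n_k + n_l)/n ] = 1. Hence the Pair-Independent mechanism assigns a valid probability distribution over candidate pairs to every action profile in which more than one candidate receives votes. -/
open Finset

/-- The Pair-Independent probabilities form a valid probability distribution on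
any profile where at least two candidates receive votes: each term
`n_k/(n - n_l) + n_l/(n - n_k) - (n_k + n_l)/n` is nonnegative and they sum to
one over the pairs `k < l`. -/
theorem stmt17 (m n : ℕ) (hm : 2 ≤ m) (cnt : Fin m → ℕ)
    (hsum : ∑ k, cnt k = n)
    (htwo : ∃ k l : Fin m, k ≠ l ∧ 0 < cnt k ∧ 0 < cnt l) :
    (∀ k l : Fin m, k ≠ l →
      0 ≤ (cnt k : ℝ) / ((n : ℝ) - (cnt l : ℝ)) +
        (cnt l : ℝ) / ((n : ℝ) - (cnt k : ℝ)) -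
        ((cnt k : ℝ) + (cnt l : ℝ)) / (n : ℝ)) ∧
    ∑ p ∈ univ.filter (fun p : Fin m × Fin m => p.1 < p.2),
      ((cnt p.1 : ℝ) / ((n : ℝ) - (cnt p.2 : ℝ)) +
        (cnt p.2 : ℝ) / ((n : ℝ) - (cnt p.1 : ℝ)) -
        ((cnt p.1 : ℝ) + (cnt p.2 : ℝ)) / (n : ℝ)) = 1 := by
  classical
  obtain ⟨i, j, hij, hi, hj⟩ := htwo
  have hlt : ∀ k : Fin m, cnt k < n := by
    intro k
    obtain ⟨j', hj'k, hj'pos⟩ : ∃ j', j' ≠ k ∧ 0 < cnt j' := by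
      rcases eq_or_ne i k with rfl | h
      · exact ⟨j, fun h => hij h.symm, hj⟩
      · exact ⟨i, h, hi⟩
    have h1 : cnt k + ∑ x ∈ univ.erase k, cnt x = n := by
      rw [Finset.add_sum_erase univ cnt (mem_univ k)]; exact hsum
    have h2 : cnt j' ≤ ∑ x ∈ univ.erase k, cnt x :=
      Finset.single_le_sum (fun x _ => Nat.zero_le _)
        (Finset.mem_erase.2 ⟨hj'k, mem_univ _⟩)
    omega
  have hn : 0 < n := lt_of_le_of_lt (Nat.zero_le _) (hlt i)
  have hN0 : (0 : ℝ) < (n : ℝ) := by exact_mod_cast hn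
  have hNk : ∀ k, (cnt k : ℝ) < (n : ℝ) := fun k => by exact_mod_cast hlt k
  have hNkpos : ∀ k, (0 : ℝ) < (n : ℝ) - cnt k := fun k => by linarith [hNk k]
  have hcnn : ∀ k, (0 : ℝ) ≤ (cnt k : ℝ) := fun k => Nat.cast_nonneg _
  have hsumR : ∑ k, (cnt k : ℝ) = (n : ℝ) := by exact_mod_cast congrArg (Nat.cast : ℕ → ℝ) hsum
  set f : Fin m → Fin m → ℝ := fun k l =>
    (cnt k : ℝ) / ((n : ℝ) - (cnt l : ℝ)) + (cnt l : ℝ) / ((n : ℝ) - (cnt k : ℝ)) -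
      ((cnt k : ℝ) + (cnt l : ℝ)) / (n : ℝ) with hf
  have hfsymm : ∀ k l, f k l = f l k := by
    intro k l; simp only [hf]; ring
  constructor
  · intro k l _
    have h1 : (cnt k : ℝ) / n ≤ (cnt k : ℝ) / ((n : ℝ) - cnt l) := by
      gcongr
      · exact hNkpos l
      · linarith [hcnn l]
    have h2 : (cnt l : ℝ) / n ≤ (cnt l : ℝ) / ((n : ℝ) - cnt k) := by
      gcongr
      · exact hNkpos k
      · linarith [hcnn k]
    have h3 : ((cnt k : ℝ) + cnt l) / n = (cnt k : ℝ) / n + (cnt l : ℝ) / n := add_div _ _ _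
    linarith
  · -- the sum over pairs
    have key1 : ∀ l : Fin m, ∑ k, (if k ≠ l then (cnt k : ℝ) else 0) = (n : ℝ) - cnt l := by
      intro l
      have h2 : ∀ k : Fin m, (if k ≠ l then (cnt k : ℝ) else 0)
          = (cnt k : ℝ) - (if k = l then (cnt k : ℝ) else 0) := by
        intro k; by_cases h : k = l <;> simp [h]
      rw [Finset.sum_congr rfl fun k _ => h2 k, Finset.sum_sub_distrib, hsumR,
        Finset.sum_ite_eq' univ l (fun k => (cnt k : ℝ))]
      simp
    have key1' : ∀ k : Fin m, ∑ l, (if k ≠ l then (cnt l : ℝ) else 0) = (n : ℝ) - cnt k := by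
      intro k
      rw [← key1 k]
      refine Finset.sum_congr rfl fun l _ => ?_
      by_cases h : k = l <;> simp [h, eq_comm]
    have keyc : ∀ (k : Fin m) (c : ℝ), ∑ l : Fin m, (if k ≠ l then c else 0)
        = ((m : ℝ) - 1) * c := by
      intro k c
      have h2 : ∀ l : Fin m, (if k ≠ l then c else 0) = c - (if k = l then c else 0) := by
        intro l; by_cases h : k = l <;> simp [h]
      rw [Finset.sum_congr rfl fun l _ => h2 l, Finset.sum_sub_distrib,
        Finset.sum_ite_eq univ k (fun _ => c)]
      simp [Finset.card_univ]
      ring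
    have hA : ∑ k, ∑ l, (if k ≠ l then (cnt k : ℝ) / ((n : ℝ) - cnt l) else 0) = (m : ℝ) := by
      rw [Finset.sum_comm]
      have h1 : ∀ l : Fin m, ∑ k, (if k ≠ l then (cnt k : ℝ) / ((n : ℝ) - cnt l) else 0) = 1 := by
        intro l
        have h2 : ∑ k, (if k ≠ l then (cnt k : ℝ) / ((n : ℝ) - cnt l) else 0)
            = (∑ k, if k ≠ l then (cnt k : ℝ) else 0) / ((n : ℝ) - cnt l) := by
          rw [Finset.sum_div]
          refine Finset.sum_congr rfl fun k _ => ?_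
          by_cases h : k = l <;> simp [h]
        rw [h2, key1 l, div_self (ne_of_gt (hNkpos l))]
      rw [Finset.sum_congr rfl fun l _ => h1 l]
      simp [Finset.card_univ]
    have hB : ∑ k, ∑ l, (if k ≠ l then (cnt l : ℝ) / ((n : ℝ) - cnt k) else 0) = (m : ℝ) := by
      have h1 : ∀ k : Fin m, ∑ l, (if k ≠ l then (cnt l : ℝ) / ((n : ℝ) - cnt k) else 0) = 1 := by
        intro k
        have h2 : ∑ l, (if k ≠ l then (cnt l : ℝ) / ((n : ℝ) - cnt k) else 0)
            = (∑ l, if k ≠ l then (cnt l : ℝ) else 0) / ((n : ℝ) - cnt k) := by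
          rw [Finset.sum_div]
          refine Finset.sum_congr rfl fun l _ => ?_
          by_cases h : k = l <;> simp [h]
        rw [h2, key1' k, div_self (ne_of_gt (hNkpos k))]
      rw [Finset.sum_congr rfl fun k _ => h1 k]
      simp [Finset.card_univ]
    have hC : ∑ k, ∑ l, (if k ≠ l then ((cnt k : ℝ) + cnt l) / (n : ℝ) else 0)
        = 2 * ((m : ℝ) - 1) := by
      have h1 : ∀ k : Fin m, ∑ l, (if k ≠ l then ((cnt k : ℝ) + cnt l) / (n : ℝ) else 0)
          = (((m : ℝ) - 1) * cnt k + ((n : ℝ) - cnt k)) / n := by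
        intro k
        have h2 : ∑ l, (if k ≠ l then ((cnt k : ℝ) + cnt l) / (n : ℝ) else 0)
            = ((∑ l, if k ≠ l then (cnt k : ℝ) else 0)
              + (∑ l, if k ≠ l then (cnt l : ℝ) else 0)) / n := by
          rw [← Finset.sum_add_distrib, Finset.sum_div]
          refine Finset.sum_congr rfl fun l _ => ?_
          by_cases h : k = l <;> simp [h, add_div]
        rw [h2, keyc k, key1' k]
      rw [Finset.sum_congr rfl fun k _ => h1 k, ← Finset.sum_div,
        Finset.sum_add_distrib, ← Finset.mul_sum, hsumR, Finset.sum_sub_distrib, hsumR]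
      simp only [Finset.sum_const, Finset.card_univ, Fintype.card_fin, nsmul_eq_mul]
      field_simp
      ring
    have hne : ∑ k, ∑ l, (if k ≠ l then f k l else 0) = 2 := by
      have expand : ∀ k l : Fin m, (if k ≠ l then f k l else 0)
          = (if k ≠ l then (cnt k : ℝ) / ((n : ℝ) - cnt l) else 0)
            + (if k ≠ l then (cnt l : ℝ) / ((n : ℝ) - cnt k) else 0)
            - (if k ≠ l then ((cnt k : ℝ) + cnt l) / (n : ℝ) else 0) := by
        intro k l; by_cases h : k = l <;> simp [hf, h]
      calc ∑ k, ∑ l, (if k ≠ l then f k l else 0)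
          = ∑ k, ∑ l, ((if k ≠ l then (cnt k : ℝ) / ((n : ℝ) - cnt l) else 0)
            + (if k ≠ l then (cnt l : ℝ) / ((n : ℝ) - cnt k) else 0)
            - (if k ≠ l then ((cnt k : ℝ) + cnt l) / (n : ℝ) else 0)) := by
            exact Finset.sum_congr rfl fun k _ => Finset.sum_congr rfl fun l _ => expand k l
        _ = 2 := by
            simp only [Finset.sum_sub_distrib, Finset.sum_add_distrib]
            rw [hA, hB, hC]; ring
    have hswap : (∑ k, ∑ l, if l < k then f k l else 0)
        = ∑ k, ∑ l, if k < l then f k l else 0 := by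
      rw [Finset.sum_comm]
      exact Finset.sum_congr rfl fun k _ => Finset.sum_congr rfl fun l _ => by rw [hfsymm]
    have hsplit : (∑ k, ∑ l, if k < l then f k l else 0)
        + (∑ k, ∑ l, if l < k then f k l else 0)
        = ∑ k, ∑ l, if k ≠ l then f k l else 0 := by
      rw [← Finset.sum_add_distrib]
      refine Finset.sum_congr rfl fun k _ => ?_
      rw [← Finset.sum_add_distrib]
      refine Finset.sum_congr rfl fun l _ => ?_
      rcases lt_trichotomy k l with h | h | h
      · simp [h, h.ne, lt_asymm h]
      · simp [h]
      · simp [h, (h.ne).symm, lt_asymm h]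
    have hmain : ∑ k, ∑ l, (if k < l then f k l else 0) = 1 := by
      rw [hswap, hne] at hsplit
      linarith
    calc ∑ p ∈ univ.filter (fun p : Fin m × Fin m => p.1 < p.2),
        ((cnt p.1 : ℝ) / ((n : ℝ) - (cnt p.2 : ℝ)) +
          (cnt p.2 : ℝ) / ((n : ℝ) - (cnt p.1 : ℝ)) -
          ((cnt p.1 : ℝ) + (cnt p.2 : ℝ)) / (n : ℝ))
        = ∑ p : Fin m × Fin m, (if p.1 < p.2 then f p.1 p.2 else 0) := by
          rw [Finset.sum_filter]
      _ = ∑ k, ∑ l, (if k < l then f k l else 0) := by rw [Fintype.sum_prod_type]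
      _ = 1 := hmain
end

section
/- Consider m candidates at locations y_1, …, y_m in a Euclidean space and n voters, an action profile a, and a location profile x consistent with a. Then for every pair of distinct candidates (y_k, y_l), SC((y_k, y_l), x) ≤ OPT(x) + (n − n_k − n_l)·d_max, where n_k and n_l are the numbers of voters whose action is k and l respectively, and d_max is the maximum distance between two distinct candidates. -/
open Finset

/-- Cost of a point `z` when the pair of candidates `(y k, y l)` is elected:
the distance to the closer of the two winners. -/
noncomputable def pairCost {α : Type*} [PseudoMetricSpace α] {m : ℕ}
    (y : Fin m → α) (k l : Fin m) (z : α) : ℝ :=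
  min (dist z (y k)) (dist z (y l))

/-- Social cost of the pair `(y k, y l)` on the location profile `x`. -/
noncomputable def socialCost {α : Type*} [PseudoMetricSpace α] {m n : ℕ}
    (y : Fin m → α) (k l : Fin m) (x : Fin n → α) : ℝ :=
  ∑ i, pairCost y k l (x i)

/-- Optimal social cost over all pairs of distinct candidates. -/
noncomputable def OPT {α : Type*} [PseudoMetricSpace α] {m n : ℕ}
    (y : Fin m → α) (x : Fin n → α) : ℝ :=
  sInf {c : ℝ | ∃ k l : Fin m, k ≠ l ∧ c = socialCost y k l x}

/-- A location profile `x` is consistent with an action profile `a` if every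
voter votes for (one of) her nearest candidate(s). -/
def Consistent {α : Type*} [PseudoMetricSpace α] {m n : ℕ}
    (y : Fin m → α) (a : Fin n → Fin m) (x : Fin n → α) : Prop :=
  ∀ (i : Fin n) (k : Fin m), dist (x i) (y (a i)) ≤ dist (x i) (y k)

/-- Number of votes received by candidate `k` under action profile `a`. -/
def votes {m n : ℕ} (a : Fin n → Fin m) (k : Fin m) : ℕ :=
  (univ.filter fun i => a i = k).card

/-- Maximum distance between two distinct candidates. -/
noncomputable def dmaxC {α : Type*} [PseudoMetricSpace α] {m : ℕ} (y : Fin m → α) : ℝ :=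
  sSup {c : ℝ | ∃ k l : Fin m, k ≠ l ∧ c = dist (y k) (y l)}

/-- Minimum distance between two distinct candidates. -/
noncomputable def dminC {α : Type*} [PseudoMetricSpace α] {m : ℕ} (y : Fin m → α) : ℝ :=
  sInf {c : ℝ | ∃ k l : Fin m, k ≠ l ∧ c = dist (y k) (y l)}

/-- For any consistent instance, the social cost of any pair of distinct
candidates `(k, l)` is at most `OPT(x) + (n - n_k - n_l) · d_max`. -/
theorem stmt19 {dim m n : ℕ} (hm : 2 ≤ m)
    (y : Fin m → EuclideanSpace ℝ (Fin dim))
    (a : Fin n → Fin m) (x : Fin n → EuclideanSpace ℝ (Fin dim))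
    (hcons : Consistent y a x) :
    ∀ k l : Fin m, k ≠ l →
      socialCost y k l x ≤
        OPT y x + ((n : ℝ) - (votes a k : ℝ) - (votes a l : ℝ)) * dmaxC y := by
  intro k l hkl
  -- The set of pairwise candidate distances is finite, so dmaxC bounds each distance
  have hdfin : ({c : ℝ | ∃ p q : Fin m, p ≠ q ∧ c = dist (y p) (y q)}).Finite := by
    have : {c : ℝ | ∃ p q : Fin m, p ≠ q ∧ c = dist (y p) (y q)} ⊆
        (fun pq : Fin m × Fin m => dist (y pq.1) (y pq.2)) '' Set.univ := by
      rintro c ⟨p, q, _, rfl⟩; exact ⟨(p, q), trivial, rfl⟩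
    exact (Set.Finite.image _ (Set.finite_univ)).subset this
  have hdmax : ∀ p q : Fin m, p ≠ q → dist (y p) (y q) ≤ dmaxC y := by
    intro p q hpq
    exact le_csSup hdfin.bddAbove ⟨p, q, hpq, rfl⟩
  -- OPT is attained
  have hsfin : ({c : ℝ | ∃ p q : Fin m, p ≠ q ∧ c = socialCost y p q x}).Finite := by
    have : {c : ℝ | ∃ p q : Fin m, p ≠ q ∧ c = socialCost y p q x} ⊆
        (fun pq : Fin m × Fin m => socialCost y pq.1 pq.2 x) '' Set.univ := by
      rintro c ⟨p, q, _, rfl⟩; exact ⟨(p, q), trivial, rfl⟩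
    exact (Set.Finite.image _ (Set.finite_univ)).subset this
  have hsne : ({c : ℝ | ∃ p q : Fin m, p ≠ q ∧ c = socialCost y p q x}).Nonempty :=
    ⟨socialCost y k l x, k, l, hkl, rfl⟩
  obtain ⟨p, q, hpq, hOPT⟩ : ∃ p q : Fin m, p ≠ q ∧ OPT y x = socialCost y p q x :=
    hsne.csInf_mem hsfin
  -- per-voter inequality
  have hvoter : ∀ i : Fin n, pairCost y k l (x i) ≤ pairCost y p q (x i) +
      (if a i = k ∨ a i = l then (0 : ℝ) else dmaxC y) := by
    intro i
    have hmin : dist (x i) (y (a i)) ≤ pairCost y p q (x i) :=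
      le_min (hcons i p) (hcons i q)
    by_cases h : a i = k ∨ a i = l
    · simp only [h, if_true, add_zero]
      refine le_trans ?_ hmin
      rcases h with h | h
      · exact h ▸ min_le_left _ _
      · exact h ▸ min_le_right _ _
    · simp only [h, if_false]
      push_neg at h
      have h1 : pairCost y k l (x i) ≤ dist (x i) (y k) := min_le_left _ _
      have h2 : dist (x i) (y k) ≤ dist (x i) (y (a i)) + dist (y (a i)) (y k) :=
        dist_triangle _ _ _
      have h3 : dist (y (a i)) (y k) ≤ dmaxC y := hdmax _ _ h.1
      linarith
  -- sum up
  have hsum : socialCost y k l x ≤ socialCost y p q x +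
      ∑ i : Fin n, (if a i = k ∨ a i = l then (0 : ℝ) else dmaxC y) := by
    rw [socialCost, socialCost, ← Finset.sum_add_distrib]
    exact Finset.sum_le_sum fun i _ => hvoter i
  have hcard : ∑ i : Fin n, (if a i = k ∨ a i = l then (0 : ℝ) else dmaxC y)
      = ((n : ℝ) - (votes a k : ℝ) - (votes a l : ℝ)) * dmaxC y := by
    rw [Finset.sum_ite, Finset.sum_const_zero, Finset.sum_const, zero_add, nsmul_eq_mul]
    congr 1
    have hunion : (univ.filter fun i => a i = k ∨ a i = l)
        = (univ.filter fun i => a i = k) ∪ (univ.filter fun i => a i = l) := by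
      rw [Finset.filter_or]
    have hdisj : Disjoint (univ.filter fun i : Fin n => a i = k)
        (univ.filter fun i : Fin n => a i = l) := by
      rw [Finset.disjoint_filter]
      intro i _ hik hil
      exact hkl (hik ▸ hil ▸ rfl)
    have hpos : (univ.filter fun i : Fin n => a i = k ∨ a i = l).card
        = votes a k + votes a l := by
      rw [hunion, Finset.card_union_of_disjoint hdisj]; rfl
    have hneg : (univ.filter fun i : Fin n => ¬(a i = k ∨ a i = l)).card
        + (univ.filter fun i : Fin n => a i = k ∨ a i = l).card = n := by
      rw [add_comm, Finset.card_filter_add_card_filter_not, Finset.card_univ,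
        Fintype.card_fin]
    have := congrArg (fun t : ℕ => (t : ℝ)) hneg
    push_cast at this ⊢
    rw [hpos] at hneg
    have : ((univ.filter fun i : Fin n => ¬(a i = k ∨ a i = l)).card : ℝ)
        + ((votes a k : ℝ) + (votes a l : ℝ)) = (n : ℝ) := by
      exact_mod_cast congrArg (fun t : ℕ => (t : ℝ)) hneg
    linarith
  rw [hOPT]
  calc socialCost y k l x
      ≤ socialCost y p q x + ∑ i : Fin n, (if a i = k ∨ a i = l then (0 : ℝ) else dmaxC y) :=
        hsum
    _ = socialCost y p q x + ((n : ℝ) - (votes a k : ℝ) - (votes a l : ℝ)) * dmaxC y := by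
        rw [hcard]
end
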